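/- Let G be a strict episode with machine M = M(G). A sequence S over Σ covers the sink state of M(G) (i.e., some subsequence T of S satisfies g(M, T) = G) if and only if the whole sequence leads greedily to the sink state: g(M, S) = G. -/

import Mathlib

open scoped Classical

/-- An episode: a finite DAG with labelled vertices. -/
structure Episode (V A : Type*) where
  verts : Finset V
  edges : Finset (V × V)
  lab : V → A
  edges_sub : ∀ e ∈ edges, e.1 ∈ verts ∧ e.2 ∈ verts
  acyclic : ∀ v, ¬ Relation.TransGen (fun a b => (a, b) ∈ edges) v v

namespace Episode

variable {V A : Type*} [DecidableEq V]

/-- A strict episode: any two distinct vertices sharing a label are connected. -/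
def Strict (G : Episode V A) : Prop :=
  ∀ v ∈ G.verts, ∀ w ∈ G.verts, v ≠ w → G.lab v = G.lab w →
    (v, w) ∈ G.edges ∨ (w, v) ∈ G.edges

/-- `W` induces a prefix subgraph of `G`: it is closed under taking ancestors. -/
def IsPrefix (G : Episode V A) (W : Finset V) : Prop :=
  W ⊆ G.verts ∧ ∀ v ∈ W, ∀ w, (w, v) ∈ G.edges → w ∈ W

/-- Labelled edge of the machine `M(G)`: `(H, F)` is an edge with label `l` when `H` is
obtained from `F` by deleting a single sink vertex of `F` labelled `l`
(states are identified with their vertex sets, as prefix subgraphs are induced). -/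
def MachEdge (G : Episode V A) (H F : Finset V) (l : A) : Prop :=
  G.IsPrefix H ∧ G.IsPrefix F ∧
    ∃ x, x ∉ H ∧ F = insert x H ∧ G.lab x = l ∧ ∀ w ∈ F, (x, w) ∉ G.edges

/-- The set of (unlabelled) edges of the machine `M(G)`. -/
def MachineEdges (G : Episode V A) : Set (Finset V × Finset V) :=
  {e | ∃ l, G.MachEdge e.1 e.2 l}

/-- A sequence `S` covers an episode `G`. -/
def Covers (G : Episode V A) (S : List A) : Prop :=
  ∃ m : V → ℕ, Set.InjOn m ↑G.verts ∧
    (∀ v ∈ G.verts, S[m v]? = some (G.lab v)) ∧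
    ∀ e ∈ G.edges, m e.1 < m e.2

/-- The induced episode `G(W)`. -/
def induce (G : Episode V A) (W : Finset V) : Episode V A where
  verts := G.verts ∩ W
  edges := G.edges.filter fun e => e.1 ∈ W ∧ e.2 ∈ W
  lab := G.lab
  edges_sub := by
    intro e he
    rw [Finset.mem_filter] at he
    have h1 := G.edges_sub e he.1
    exact ⟨Finset.mem_inter.mpr ⟨h1.1, he.2.1⟩, Finset.mem_inter.mpr ⟨h1.2, he.2.2⟩⟩
  acyclic := by
    intro v hv
    exact G.acyclic v
      (Relation.TransGen.mono (fun a b hab => (Finset.mem_filter.mp hab).1) _ _ hv)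

/-- One greedy step of the machine `M(G)` from state `H` reading the symbol `s`:
follow the outgoing edge labelled `s` if there is one, otherwise stay. -/
noncomputable def greedyStep (G : Episode V A) (H : Finset V) (s : A) : Finset V :=
  if h : ∃ F, G.MachEdge H F s then h.choose else H

/-- The greedy state `g(M(G), S, H)`. -/
noncomputable def greedy (G : Episode V A) : Finset V → List A → Finset V
  | H, [] => H
  | H, s :: S => greedy G (G.greedyStep H s) S

/-- The edge set `block(W | G)` of the machine `M(G)`. -/
def Block (G : Episode V A) (W : Finset V) : Set (Finset V × Finset V) :=
  {e | (∃ l, G.MachEdge e.1 e.2 l) ∧ (e.1 ∩ W).Nonempty ∧ e.2 \ e.1 ⊆ W}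

/-- The states of the machine `M(G)`: all prefix subgraphs of `G`. -/
noncomputable def states (G : Episode V A) : Finset (Finset V) :=
  G.verts.powerset.filter fun X => G.IsPrefix X

/-- The number of positions `i` of `S` at which the machine is (greedily) in state `H`
and the symbol read is `l`. -/
noncomputable def countHL (G : Episode V A) (S : List A) (H : Finset V) (l : A) : ℕ :=
  ((Finset.range S.length).filter fun i => G.greedy ∅ (S.take i) = H ∧ S[i]? = some l).card

section Prob

variable [Fintype A]

/-- `pInd G p H n`: probability that `n` i.i.d. symbols with distribution `p`
lead the machine greedily from the source state to `H`. -/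
noncomputable def pInd (G : Episode V A) (p : A → ℝ) (H : Finset V) (n : ℕ) : ℝ :=
  ∑ f : Fin n → A, if G.greedy ∅ (List.ofFn f) = H then ∏ i, p (f i) else 0

/-- Unnormalized weight of label `l` at state `H` in the partition model. -/
noncomputable def pweight (G : Episode V A) (C₁ C₂ : Set (Finset V × Finset V))
    (u : A → ℝ) (t₁ t₂ : ℝ) (H : Finset V) (l : A) : ℝ :=
  if ∃ F, (H, F) ∈ C₁ ∧ G.MachEdge H F l then Real.exp (u l + t₁)
  else if ∃ F, (H, F) ∈ C₂ ∧ G.MachEdge H F l then Real.exp (u l + t₂)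
  else Real.exp (u l)

/-- Conditional probability `p(l | H)` of the partition model. -/
noncomputable def condP (G : Episode V A) (C₁ C₂ : Set (Finset V × Finset V))
    (u : A → ℝ) (t₁ t₂ : ℝ) (H : Finset V) (l : A) : ℝ :=
  G.pweight C₁ C₂ u t₁ t₂ H l / ∑ l' : A, G.pweight C₁ C₂ u t₁ t₂ H l'

/-- Probability of a sequence under the partition model, started from state `H`. -/
noncomputable def seqP (G : Episode V A) (C₁ C₂ : Set (Finset V × Finset V))
    (u : A → ℝ) (t₁ t₂ : ℝ) : Finset V → List A → ℝ
  | _, [] => 1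
  | H, s :: S => G.condP C₁ C₂ u t₁ t₂ H s * seqP G C₁ C₂ u t₁ t₂ (G.greedyStep H s) S

/-- `pPart G C₁ C₂ u t₁ t₂ H n`: probability under the partition model that a random
sequence of length `n` leads the machine greedily from the source state to `H`. -/
noncomputable def pPart (G : Episode V A) (C₁ C₂ : Set (Finset V × Finset V))
    (u : A → ℝ) (t₁ t₂ : ℝ) (H : Finset V) (n : ℕ) : ℝ :=
  ∑ f : Fin n → A,
    if G.greedy ∅ (List.ofFn f) = H then G.seqP C₁ C₂ u t₁ t₂ ∅ (List.ofFn f) else 0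

end Prob

/-- The transitive closure of an episode. -/
noncomputable def closure (G : Episode V A) : Episode V A where
  verts := G.verts
  edges := (G.verts ×ˢ G.verts).filter fun e =>
    Relation.TransGen (fun a b => (a, b) ∈ G.edges) e.1 e.2
  lab := G.lab
  edges_sub := by
    intro e he
    rw [Finset.mem_filter] at he
    exact Finset.mem_product.mp he.1
  acyclic := by
    intro v hv
    apply G.acyclic v
    rw [← Relation.transGen_idem (r := fun a b => (a, b) ∈ G.edges)]
    refine Relation.TransGen.mono ?_ _ _ hv
    intro a b hab
    exact (Finset.mem_filter.mp hab).2

end Episode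

/-! For a strict episode every state of `M(G)` has at most one outgoing edge with a given label,
so the greedy step is a function of the state, and it is monotone: if `H₁ ⊆ H₂` and `H₁` can
add a sink `x` labelled `s`, then either `x ∈ H₂` already or `H₂` can add `x` as well. Reading an
extra symbol never shrinks the state either, so the greedy state of a subsequence of `S` is contained
in that of `S`; since every state is contained in `G.verts`, reaching the sink with a subsequence
forces reaching it with `S`. -/

namespace Episode

variable {V A : Type*} (G : Episode V A)

lemma isPrefix_empty : G.IsPrefix ∅ :=
  ⟨Finset.empty_subset _, fun _ hv => absurd hv (Finset.notMem_empty _)⟩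

lemma notMem_edges_self (x : V) : (x, x) ∉ G.edges :=
  fun h => G.acyclic x (Relation.TransGen.single h)

variable [DecidableEq V]

lemma mem_of_isPrefix_insert {H : Finset V} {x y : V} (hH : G.IsPrefix (insert y H))
    (hxy : (x, y) ∈ G.edges) (hne : x ≠ y) : x ∈ H :=
  (Finset.mem_insert.mp (hH.2 y (Finset.mem_insert_self y H) x hxy)).resolve_left hne

lemma machEdge_insert {H : Finset V} {x : V} (hH : G.IsPrefix H) (hx : x ∉ H)
    (hxv : x ∈ G.verts) (hpar : ∀ w, (w, x) ∈ G.edges → w ∈ H) :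
    G.MachEdge H (insert x H) (G.lab x) := by
  refine ⟨hH, ⟨Finset.insert_subset hxv hH.1, ?_⟩, x, hx, rfl, rfl, ?_⟩
  · intro v hv w hw
    rcases Finset.mem_insert.mp hv with rfl | hv
    · exact Finset.mem_insert_of_mem (hpar w hw)
    · exact Finset.mem_insert_of_mem (hH.2 v hv w hw)
  · intro w hw hxw
    rcases Finset.mem_insert.mp hw with rfl | hw
    · exact G.notMem_edges_self w hxw
    · exact hx (hH.2 w hw x hxw)

variable {G}

lemma machEdge_unique (hG : G.Strict) {H F₁ F₂ : Finset V} {l : A}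
    (h₁ : G.MachEdge H F₁ l) (h₂ : G.MachEdge H F₂ l) : F₁ = F₂ := by
  obtain ⟨-, hF₁, x₁, hx₁, rfl, hl₁, -⟩ := h₁
  obtain ⟨-, hF₂, x₂, hx₂, rfl, hl₂, -⟩ := h₂
  obtain rfl | hne := eq_or_ne x₁ x₂
  · rfl
  -- Strictness makes one sink a parent of the other, which then already lies in `H`.
  rcases hG x₁ (hF₁.1 (Finset.mem_insert_self _ _)) x₂ (hF₂.1 (Finset.mem_insert_self _ _)) hne
    (hl₁.trans hl₂.symm) with he | he
  · exact absurd (G.mem_of_isPrefix_insert hF₂ he hne) hx₁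
  · exact absurd (G.mem_of_isPrefix_insert hF₁ he hne.symm) hx₂

lemma greedyStep_eq_of_machEdge (hG : G.Strict) {H F : Finset V} {l : A}
    (h : G.MachEdge H F l) : G.greedyStep H l = F := by
  have hex : ∃ F, G.MachEdge H F l := ⟨F, h⟩
  rw [greedyStep, dif_pos hex]
  exact machEdge_unique hG hex.choose_spec h

lemma greedyStep_eq_self {H : Finset V} {l : A} (h : ¬ ∃ F, G.MachEdge H F l) :
    G.greedyStep H l = H :=
  dif_neg h

lemma isPrefix_greedyStep {H : Finset V} (hH : G.IsPrefix H) (l : A) :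
    G.IsPrefix (G.greedyStep H l) := by
  by_cases h : ∃ F, G.MachEdge H F l
  · rw [greedyStep, dif_pos h]
    exact h.choose_spec.2.1
  · rwa [greedyStep_eq_self h]

lemma subset_greedyStep (H : Finset V) (l : A) : H ⊆ G.greedyStep H l := by
  by_cases h : ∃ F, G.MachEdge H F l
  · obtain ⟨-, -, x, -, hF, -⟩ := h.choose_spec
    rw [greedyStep, dif_pos h, hF]
    exact Finset.subset_insert x H
  · rw [greedyStep_eq_self h]

lemma greedyStep_mono (hG : G.Strict) {H₁ H₂ : Finset V} (h₂ : G.IsPrefix H₂)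
    (hsub : H₁ ⊆ H₂) (l : A) : G.greedyStep H₁ l ⊆ G.greedyStep H₂ l := by
  by_cases h : ∃ F, G.MachEdge H₁ F l
  · obtain ⟨F, hF⟩ := h
    rw [greedyStep_eq_of_machEdge hG hF]
    obtain ⟨-, hFp, x, -, rfl, rfl, -⟩ := hF
    by_cases hx₂ : x ∈ H₂
    · exact Finset.insert_subset (subset_greedyStep H₂ _ hx₂) (hsub.trans (subset_greedyStep H₂ _))
    · have hpar : ∀ w, (w, x) ∈ G.edges → w ∈ H₂ := fun w hw =>
        hsub (G.mem_of_isPrefix_insert hFp hw fun h => G.notMem_edges_self x (h ▸ hw))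
      rw [greedyStep_eq_of_machEdge hG
        (G.machEdge_insert h₂ hx₂ (hFp.1 (Finset.mem_insert_self x H₁)) hpar)]
      exact Finset.insert_subset_insert x hsub
  · rw [greedyStep_eq_self h]
    exact hsub.trans (subset_greedyStep H₂ l)

lemma isPrefix_greedy : ∀ (S : List A) {H : Finset V}, G.IsPrefix H → G.IsPrefix (G.greedy H S)
  | [], _, hH => hH
  | l :: S, _, hH => isPrefix_greedy S (isPrefix_greedyStep hH l)

lemma greedy_mono_of_sublist (hG : G.Strict) {T S : List A} (hTS : T.Sublist S) :
    ∀ {H₁ H₂ : Finset V}, G.IsPrefix H₂ → H₁ ⊆ H₂ → G.greedy H₁ T ⊆ G.greedy H₂ S := by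
  induction hTS with
  | slnil => exact fun _ hsub => hsub
  | cons l _ ih =>
    exact fun h₂ hsub => ih (isPrefix_greedyStep h₂ l) (hsub.trans (subset_greedyStep _ l))
  | cons_cons l _ ih =>
    exact fun h₂ hsub => ih (isPrefix_greedyStep h₂ l) (greedyStep_mono hG h₂ hsub l)

end Episode

/-- A sequence covers the sink state of the machine of a strict episode
(i.e. some subsequence leads greedily to the sink) iff the whole sequence leads
greedily to the sink state. -/
theorem Episode.covers_sink_iff_greedy {V A : Type*} [DecidableEq V]
    (G : Episode V A) (hG : G.Strict) (S : List A) :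
    (∃ T : List A, T.Sublist S ∧ G.greedy ∅ T = G.verts) ↔ G.greedy ∅ S = G.verts := by
  refine ⟨fun ⟨T, hTS, hT⟩ => ?_, fun h => ⟨S, List.Sublist.refl S, h⟩⟩
  have hle : G.greedy ∅ T ⊆ G.greedy ∅ S :=
    greedy_mono_of_sublist hG hTS G.isPrefix_empty subset_rfl
  exact (G.isPrefix_greedy S G.isPrefix_empty).1.antisymm (hT ▸ hle)
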